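/- arXiv:2006.11274 — 7 statements merged into one kernel-verified Lean document; each statement's English description precedes it below -/
import Mathlib

section
/- Let S and A be nonempty finite sets, H ≥ 1, and let (P_h)_{h=1}^H be transition kernels and r = (r_h)_{h=1}^H, u = (u_h)_{h=1}^H be reward collections with u_h(s,a) ≥ 0 for all (s,a). Let Q_h : S × A → ℝ (h = 1,…,H) be arbitrary functions, set V_{H+1} ≡ 0, V_h(s) = max_{a∈A} Q_h(s,a), and let π be the greedy policy π_h(s) ∈ argmax_{a∈A} Q_h(s,a). Assume that for all h ∈ {1,…,H} and all (s,a) ∈ S × A: Q*_h(s,a,r) ≤ Q_h(s,a) ≤ r_h(s,a) + Σ_{s'∈S} P_h(s'|s,a) V_{h+1}(s') + 2 u_h(s,a). Then for every initial distribution μ on S: E_{s∼μ}[V*_1(s,r) − V^π_1(s,r)] ≤ 2 E_{s∼μ}[V^π_1(s,u)] ≤ 2 E_{s∼μ}[V*_1(s,u)]. -/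
/-!
Optimism gives `V*_h ≤ V_h`, since `V*_h` and `V_h` are maxima of `Q*_h ≤ Q_h`. Along the greedy
action, `V_h ≤ Q_h(·, π_h) ≤ r_h + P_h V_{h+1} + 2 u_h`, so `V − V^π(r)` is a subsolution of the
Bellman equation of `π` with reward `2u`, whose solution is `2 V^π(u)`; likewise `V*(u)` is a
supersolution of the Bellman equation of `π` with reward `u`. Both estimates are instances of
the comparison principle for policy evaluation: a subsolution lies below a supersolution.
-/

open Finset

lemma le_of_le_bellman_of_bellman_le {S : Type*} [Fintype S] (H : ℕ)
    (P : ℕ → S → S → ℝ) (hP : ∀ h ∈ Icc 1 H, ∀ s s', 0 ≤ P h s s')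
    (c f g : ℕ → S → ℝ) (hend : ∀ s, f (H + 1) s ≤ g (H + 1) s)
    (hf : ∀ h ∈ Icc 1 H, ∀ s, f h s ≤ c h s + ∑ s', P h s s' * f (h + 1) s')
    (hg : ∀ h ∈ Icc 1 H, ∀ s, c h s + ∑ s', P h s s' * g (h + 1) s' ≤ g h s) :
    ∀ s, f 1 s ≤ g 1 s := by
  refine Nat.decreasingInduction' (P := fun h => ∀ s, f h s ≤ g h s) (m := 1) (n := H + 1)
    (fun h hlt h1 ih s => ?_) (by omega) hend
  have hh : h ∈ Icc 1 H := mem_Icc.mpr ⟨h1, by omega⟩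
  calc f h s ≤ c h s + ∑ s', P h s s' * f (h + 1) s' := hf h hh s
    _ ≤ c h s + ∑ s', P h s s' * g (h + 1) s' := by
      gcongr with s'
      · exact hP h hh s s'
      · exact ih s'
    _ ≤ g h s := hg h hh s

lemma sub_value_le_mul_value_of_le_bellman {S : Type*} [Fintype S] (H : ℕ)
    (P : ℕ → S → S → ℝ) (hP : ∀ h ∈ Icc 1 H, ∀ s s', 0 ≤ P h s s') (r b : ℕ → S → ℝ) (c : ℝ)
    (V Vr Vb : ℕ → S → ℝ) (hVend : ∀ s, V (H + 1) s = 0) (hVrEnd : ∀ s, Vr (H + 1) s = 0)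
    (hVbEnd : ∀ s, Vb (H + 1) s = 0)
    (hV : ∀ h ∈ Icc 1 H, ∀ s, V h s ≤ r h s + ∑ s', P h s s' * V (h + 1) s' + c * b h s)
    (hVr : ∀ h ∈ Icc 1 H, ∀ s, Vr h s = r h s + ∑ s', P h s s' * Vr (h + 1) s')
    (hVb : ∀ h ∈ Icc 1 H, ∀ s, Vb h s = b h s + ∑ s', P h s s' * Vb (h + 1) s') :
    ∀ s, V 1 s - Vr 1 s ≤ c * Vb 1 s := by
  refine le_of_le_bellman_of_bellman_le H P hP (fun h s => c * b h s)
    (fun h s => V h s - Vr h s) (fun h s => c * Vb h s) (by simp [hVend, hVrEnd, hVbEnd])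
    (fun h hh s => ?_) (fun h hh s => ?_)
  · have := hV h hh s
    rw [hVr h hh s]
    simp only [mul_sub, sum_sub_distrib]
    linarith
  · simp only [hVb h hh s, mul_add, mul_sum, mul_left_comm, le_refl]

lemma value_le_optimalValue {S A : Type*} [Fintype S] [Fintype A] (H : ℕ)
    (P : ℕ → S → A → S → ℝ) (hP : ∀ h ∈ Icc 1 H, ∀ s a s', 0 ≤ P h s a s')
    (u : ℕ → S → A → ℝ) (π : ℕ → S → A) (Qs : ℕ → S → A → ℝ) (Vs Vp : ℕ → S → ℝ)
    (hVsEnd : ∀ s, Vs (H + 1) s = 0)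
    (hQs : ∀ h ∈ Icc 1 H, ∀ s a, Qs h s a = u h s a + ∑ s', P h s a s' * Vs (h + 1) s')
    (hVs : ∀ h ∈ Icc 1 H, ∀ s, Vs h s = ⨆ a, Qs h s a)
    (hVpEnd : ∀ s, Vp (H + 1) s = 0)
    (hVp : ∀ h ∈ Icc 1 H, ∀ s, Vp h s = u h s (π h s) + ∑ s', P h s (π h s) s' * Vp (h + 1) s') :
    ∀ s, Vp 1 s ≤ Vs 1 s :=
  le_of_le_bellman_of_bellman_le H (fun h s => P h s (π h s)) (fun h hh s => hP h hh s _)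
    (fun h s => u h s (π h s)) Vp Vs (by simp [hVpEnd, hVsEnd])
    (fun h hh s => (hVp h hh s).le)
    (fun h hh s => (hQs h hh s (π h s)).symm.le.trans
      (hVs h hh s ▸ le_ciSup (Set.finite_range _).bddAbove (π h s)))

theorem stmt_0_general {S A : Type*} [Fintype S] [Fintype A] [Nonempty A]
    (H : ℕ) (hH : 1 ≤ H)
    -- transition kernels
    (P : ℕ → S → A → S → ℝ)
    (hP0 : ∀ h ∈ Finset.Icc 1 H, ∀ s a s', 0 ≤ P h s a s')
    -- reward collections r and u, with u nonnegative
    (r u : ℕ → S → A → ℝ)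
    -- arbitrary Q functions and induced V with V_{H+1} ≡ 0, V_h = max_a Q_h
    (Q : ℕ → S → A → ℝ) (V : ℕ → S → ℝ)
    (hVend : ∀ s, V (H + 1) s = 0)
    (hVdef : ∀ h ∈ Finset.Icc 1 H, ∀ s, V h s = ⨆ a, Q h s a)
    -- greedy policy π_h(s) ∈ argmax_a Q_h(s,a)
    (π : ℕ → S → A)
    (hπ : ∀ h ∈ Finset.Icc 1 H, ∀ s a, Q h s a ≤ Q h s (π h s))
    -- optimal value functions for reward r
    (Qstar : ℕ → S → A → ℝ) (Vstar : ℕ → S → ℝ)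
    (hVstar : ∀ h ∈ Finset.Icc 1 H, ∀ s, Vstar h s = ⨆ a, Qstar h s a)
    -- optimal value functions for reward u
    (QstarU : ℕ → S → A → ℝ) (VstarU : ℕ → S → ℝ)
    (hVstarUEnd : ∀ s, VstarU (H + 1) s = 0)
    (hQstarU : ∀ h ∈ Finset.Icc 1 H, ∀ s a,
      QstarU h s a = u h s a + ∑ s', P h s a s' * VstarU (h + 1) s')
    (hVstarU : ∀ h ∈ Finset.Icc 1 H, ∀ s, VstarU h s = ⨆ a, QstarU h s a)
    -- value functions of the greedy policy π, for rewards r and u respectively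
    (Vpi VpiU : ℕ → S → ℝ)
    (hVpiEnd : ∀ s, Vpi (H + 1) s = 0)
    (hVpi : ∀ h ∈ Finset.Icc 1 H, ∀ s,
      Vpi h s = r h s (π h s) + ∑ s', P h s (π h s) s' * Vpi (h + 1) s')
    (hVpiUEnd : ∀ s, VpiU (H + 1) s = 0)
    (hVpiU : ∀ h ∈ Finset.Icc 1 H, ∀ s,
      VpiU h s = u h s (π h s) + ∑ s', P h s (π h s) s' * VpiU (h + 1) s')
    -- sandwich assumption: Q*_h(s,a,r) ≤ Q_h(s,a) ≤ r_h + P_h V_{h+1} + 2 u_h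
    (hSandwich : ∀ h ∈ Finset.Icc 1 H, ∀ s a,
      Qstar h s a ≤ Q h s a ∧
      Q h s a ≤ r h s a + (∑ s', P h s a s' * V (h + 1) s') + 2 * u h s a)
    -- initial distribution μ
    (μ : S → ℝ) (hμ0 : ∀ s, 0 ≤ μ s) :
    (∑ s, μ s * (Vstar 1 s - Vpi 1 s)) ≤ 2 * (∑ s, μ s * VpiU 1 s) ∧
    2 * (∑ s, μ s * VpiU 1 s) ≤ 2 * (∑ s, μ s * VstarU 1 s) := by
  have hV_le_greedy : ∀ h ∈ Icc 1 H, ∀ s, V h s ≤ Q h s (π h s) := fun h hh s => by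
    rw [hVdef h hh s]; exact ciSup_le (hπ h hh s)
  have hoptimism (s : S) : Vstar 1 s ≤ V 1 s := by
    have h1 : 1 ∈ Icc 1 H := mem_Icc.mpr ⟨le_rfl, hH⟩
    rw [hVstar 1 h1, hVdef 1 h1]
    exact ciSup_mono (Set.finite_range _).bddAbove fun a => (hSandwich 1 h1 s a).1
  have hregret : ∀ s, V 1 s - Vpi 1 s ≤ 2 * VpiU 1 s :=
    sub_value_le_mul_value_of_le_bellman H (fun h s => P h s (π h s))
      (fun h hh s => hP0 h hh s _) _ _ 2 V Vpi VpiU hVend hVpiEnd hVpiUEnd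
      (fun h hh s => (hV_le_greedy h hh s).trans (hSandwich h hh s (π h s)).2) hVpi hVpiU
  have hpolicy : ∀ s, VpiU 1 s ≤ VstarU 1 s :=
    value_le_optimalValue H P hP0 u π QstarU VstarU VpiU hVstarUEnd hQstarU hVstarU
      hVpiUEnd hVpiU
  constructor
  · calc ∑ s, μ s * (Vstar 1 s - Vpi 1 s) ≤ ∑ s, μ s * (2 * VpiU 1 s) := by
          gcongr with s
          · exact hμ0 s
          · linarith [hoptimism s, hregret s]
      _ = 2 * ∑ s, μ s * VpiU 1 s := by simp only [mul_sum, mul_left_comm]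
  · gcongr with s
    · exact hμ0 s
    · exact hpolicy s

theorem stmt_0 {S A : Type*} [Fintype S] [Nonempty S] [Fintype A] [Nonempty A]
    (H : ℕ) (hH : 1 ≤ H)
    -- transition kernels
    (P : ℕ → S → A → S → ℝ)
    (hP0 : ∀ h ∈ Finset.Icc 1 H, ∀ s a s', 0 ≤ P h s a s')
    (hP1 : ∀ h ∈ Finset.Icc 1 H, ∀ s a, ∑ s', P h s a s' = 1)
    -- reward collections r and u, with u nonnegative
    (r u : ℕ → S → A → ℝ)
    (hu0 : ∀ h ∈ Finset.Icc 1 H, ∀ s a, 0 ≤ u h s a)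
    -- arbitrary Q functions and induced V with V_{H+1} ≡ 0, V_h = max_a Q_h
    (Q : ℕ → S → A → ℝ) (V : ℕ → S → ℝ)
    (hVend : ∀ s, V (H + 1) s = 0)
    (hVdef : ∀ h ∈ Finset.Icc 1 H, ∀ s, V h s = ⨆ a, Q h s a)
    -- greedy policy π_h(s) ∈ argmax_a Q_h(s,a)
    (π : ℕ → S → A)
    (hπ : ∀ h ∈ Finset.Icc 1 H, ∀ s a, Q h s a ≤ Q h s (π h s))
    -- optimal value functions for reward r
    (Qstar : ℕ → S → A → ℝ) (Vstar : ℕ → S → ℝ)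
    (hVstarEnd : ∀ s, Vstar (H + 1) s = 0)
    (hQstar : ∀ h ∈ Finset.Icc 1 H, ∀ s a,
      Qstar h s a = r h s a + ∑ s', P h s a s' * Vstar (h + 1) s')
    (hVstar : ∀ h ∈ Finset.Icc 1 H, ∀ s, Vstar h s = ⨆ a, Qstar h s a)
    -- optimal value functions for reward u
    (QstarU : ℕ → S → A → ℝ) (VstarU : ℕ → S → ℝ)
    (hVstarUEnd : ∀ s, VstarU (H + 1) s = 0)
    (hQstarU : ∀ h ∈ Finset.Icc 1 H, ∀ s a,
      QstarU h s a = u h s a + ∑ s', P h s a s' * VstarU (h + 1) s')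
    (hVstarU : ∀ h ∈ Finset.Icc 1 H, ∀ s, VstarU h s = ⨆ a, QstarU h s a)
    -- value functions of the greedy policy π, for rewards r and u respectively
    (Vpi VpiU : ℕ → S → ℝ)
    (hVpiEnd : ∀ s, Vpi (H + 1) s = 0)
    (hVpi : ∀ h ∈ Finset.Icc 1 H, ∀ s,
      Vpi h s = r h s (π h s) + ∑ s', P h s (π h s) s' * Vpi (h + 1) s')
    (hVpiUEnd : ∀ s, VpiU (H + 1) s = 0)
    (hVpiU : ∀ h ∈ Finset.Icc 1 H, ∀ s,
      VpiU h s = u h s (π h s) + ∑ s', P h s (π h s) s' * VpiU (h + 1) s')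
    -- sandwich assumption: Q*_h(s,a,r) ≤ Q_h(s,a) ≤ r_h + P_h V_{h+1} + 2 u_h
    (hSandwich : ∀ h ∈ Finset.Icc 1 H, ∀ s a,
      Qstar h s a ≤ Q h s a ∧
      Q h s a ≤ r h s a + (∑ s', P h s a s' * V (h + 1) s') + 2 * u h s a)
    -- initial distribution μ
    (μ : S → ℝ) (hμ0 : ∀ s, 0 ≤ μ s) (hμ1 : ∑ s, μ s = 1) :
    (∑ s, μ s * (Vstar 1 s - Vpi 1 s)) ≤ 2 * (∑ s, μ s * VpiU 1 s) ∧
    2 * (∑ s, μ s * VpiU 1 s) ≤ 2 * (∑ s, μ s * VstarU 1 s) :=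
  stmt_0_general H hH P hP0 r u Q V hVend hVdef π hπ Qstar Vstar hVstar QstarU VstarU hVstarUEnd
    hQstarU hVstarU Vpi VpiU hVpiEnd hVpi hVpiUEnd hVpiU hSandwich μ hμ0
end

section
/- Let S and A be nonempty finite sets, H ≥ 1, let (P_h)_{h=1}^H be transition kernels, and let r = (r_h)_{h=1}^H be rewards with r_h(s,a) ∈ [0,1] for all h, s, a. Let φ : S × A → ℝ^d be any feature map, let w_h ∈ ℝ^d and bonus functions u_h : S × A → [0,∞) for h = 1,…,H be given, and define backward: Q_{H+1} ≡ 0, V_{H+1} ≡ 0, Q_h(s,a) = min{⟨φ(s,a), w_h⟩ + r_h(s,a) + u_h(s,a), H}, V_h(s) = max_{a∈A} Q_h(s,a). Assume that for all h ∈ {1,…,H} and all (s,a) ∈ S × A: |⟨φ(s,a), w_h⟩ − Σ_{s'∈S} P_h(s'|s,a) V_{h+1}(s')| ≤ u_h(s,a). Then for all h and all (s,a): Q*_h(s,a,r) ≤ Q_h(s,a) ≤ r_h(s,a) + Σ_{s'∈S} P_h(s'|s,a) V_{h+1}(s') + 2 u_h(s,a). -/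
open Matrix

/-!
Optimism is proved by backward induction on `h`, carrying along the invariant
`V*_h ≤ V_h` and `V*_h ≤ H + 1 - h`. At step `h` the concentration bound gives
`P_h V*_{h+1} ≤ P_h V_{h+1} ≤ ⟨φ, w_h⟩ + u_h`, and the bound `V*_{h+1} ≤ H - h` together
with `r_h ≤ 1` keeps `Q*_h` below the clipping level `H`, so `Q*_h ≤ Q_h`; maximizing over
actions propagates the invariant to `h`. The upper bound on `Q_h` is the other half of the
concentration bound, applied to the unclipped term.
-/

theorem sum_mul_le_of_le {S : Type*} [Fintype S] {p f : S → ℝ} {c : ℝ}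
    (hp0 : ∀ s, 0 ≤ p s) (hp1 : ∑ s, p s = 1) (hf : ∀ s, f s ≤ c) :
    ∑ s, p s * f s ≤ c :=
  calc ∑ s, p s * f s ≤ ∑ s, p s * c :=
        Finset.sum_le_sum fun s _ => mul_le_mul_of_nonneg_left (hf s) (hp0 s)
    _ = c := by rw [← Finset.sum_mul, hp1, one_mul]

theorem add_le_min_of_abs_sub_le {x e e' r u c H : ℝ} (hconc : |x - e| ≤ u) (he : e' ≤ e)
    (hr : r ≤ 1) (he' : e' ≤ c) (hc : 1 + c ≤ H) :
    r + e' ≤ min (x + r + u) H := by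
  have := (abs_le.mp hconc).1
  exact le_min (by linarith) (by linarith)

theorem min_le_of_abs_sub_le {x e r u H : ℝ} (hconc : |x - e| ≤ u) :
    min (x + r + u) H ≤ r + e + 2 * u := by
  have := (abs_le.mp hconc).2
  linarith [min_le_left (x + r + u) H]

theorem optimalQ_le_clippedQ {S A : Type*} [Fintype S] [Fintype A] [Nonempty A] {H : ℕ}
    {P : ℕ → S → A → S → ℝ}
    (hP0 : ∀ h ∈ Finset.Icc 1 H, ∀ s a s', 0 ≤ P h s a s')
    (hP1 : ∀ h ∈ Finset.Icc 1 H, ∀ s a, ∑ s', P h s a s' = 1)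
    {r est u Q Qstar : ℕ → S → A → ℝ} {V Vstar : ℕ → S → ℝ}
    (hr : ∀ h ∈ Finset.Icc 1 H, ∀ s a, r h s a ≤ 1)
    (hVend : ∀ s, V (H + 1) s = 0)
    (hQdef : ∀ h ∈ Finset.Icc 1 H, ∀ s a,
      Q h s a = min (est h s a + r h s a + u h s a) (H : ℝ))
    (hVdef : ∀ h ∈ Finset.Icc 1 H, ∀ s, V h s = ⨆ a, Q h s a)
    (hVstarEnd : ∀ s, Vstar (H + 1) s = 0)
    (hQstar : ∀ h ∈ Finset.Icc 1 H, ∀ s a,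
      Qstar h s a = r h s a + ∑ s', P h s a s' * Vstar (h + 1) s')
    (hVstar : ∀ h ∈ Finset.Icc 1 H, ∀ s, Vstar h s = ⨆ a, Qstar h s a)
    (hconc : ∀ h ∈ Finset.Icc 1 H, ∀ s a,
      |est h s a - ∑ s', P h s a s' * V (h + 1) s'| ≤ u h s a) :
    ∀ h ∈ Finset.Icc 1 H, ∀ s a, Qstar h s a ≤ Q h s a := by
  have step : ∀ h ∈ Finset.Icc 1 H,
      (∀ s, Vstar (h + 1) s ≤ V (h + 1) s ∧ Vstar (h + 1) s ≤ H + 1 - ((h + 1 : ℕ) : ℝ)) →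
      ∀ s a, Qstar h s a ≤ Q h s a ∧ Qstar h s a ≤ H + 1 - h := by
    intro h hh hinv s a
    have hmono : ∑ s', P h s a s' * Vstar (h + 1) s' ≤ ∑ s', P h s a s' * V (h + 1) s' :=
      Finset.sum_le_sum fun s' _ => mul_le_mul_of_nonneg_left (hinv s').1 (hP0 h hh s a s')
    have hbound := sum_mul_le_of_le (hP0 h hh s a) (hP1 h hh s a) fun s' => (hinv s').2
    have h1 : (1 : ℝ) ≤ h := mod_cast (Finset.mem_Icc.mp hh).1
    push_cast at hbound
    rw [hQstar h hh, hQdef h hh]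
    exact ⟨add_le_min_of_abs_sub_le (hconc h hh s a) hmono (hr h hh s a) hbound (by linarith),
      by linarith [hr h hh s a]⟩
  have hinv : ∀ h ∈ Finset.Icc 1 H,
      ∀ s, Vstar (h + 1) s ≤ V (h + 1) s ∧ Vstar (h + 1) s ≤ H + 1 - ((h + 1 : ℕ) : ℝ) := by
    intro h hh
    have hhH := (Finset.mem_Icc.mp hh).2
    refine Nat.decreasingInduction' (n := H + 1)
      (P := fun k => ∀ s, Vstar k s ≤ V k s ∧ Vstar k s ≤ H + 1 - (k : ℝ))
      ?_ (by omega) fun s => by simp [hVend, hVstarEnd]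
    intro k hkn hmk hsucc s
    have hk : k ∈ Finset.Icc 1 H := Finset.mem_Icc.mpr ⟨by omega, by omega⟩
    have hQ := step k hk hsucc
    rw [hVstar k hk, hVdef k hk]
    exact ⟨ciSup_mono (Finite.bddAbove_range _) fun a => (hQ s a).1,
      ciSup_le fun a => (hQ s a).2⟩
  intro h hh s a
  exact (step h hh (hinv h hh) s a).1

theorem stmt_1_general {S A : Type*} [Fintype S] [Fintype A] [Nonempty A]
    (H d : ℕ)
    -- transition kernels
    (P : ℕ → S → A → S → ℝ)
    (hP0 : ∀ h ∈ Finset.Icc 1 H, ∀ s a s', 0 ≤ P h s a s')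
    (hP1 : ∀ h ∈ Finset.Icc 1 H, ∀ s a, ∑ s', P h s a s' = 1)
    -- rewards in [0,1]
    (r : ℕ → S → A → ℝ)
    (hr : ∀ h ∈ Finset.Icc 1 H, ∀ s a, r h s a ∈ Set.Icc (0 : ℝ) 1)
    -- feature map, weight vectors and nonnegative bonus functions
    (φ : S → A → Fin d → ℝ) (w : ℕ → Fin d → ℝ)
    (u : ℕ → S → A → ℝ)
    -- backward-defined estimates: Q_{H+1} ≡ 0, V_{H+1} ≡ 0,
    -- Q_h = min{⟨φ, w_h⟩ + r_h + u_h, H}, V_h = max_a Q_h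
    (Q : ℕ → S → A → ℝ) (V : ℕ → S → ℝ)
    (hVend : ∀ s, V (H + 1) s = 0)
    (hQdef : ∀ h ∈ Finset.Icc 1 H, ∀ s a,
      Q h s a = min (φ s a ⬝ᵥ w h + r h s a + u h s a) (H : ℝ))
    (hVdef : ∀ h ∈ Finset.Icc 1 H, ∀ s, V h s = ⨆ a, Q h s a)
    -- optimal value functions for reward r
    (Qstar : ℕ → S → A → ℝ) (Vstar : ℕ → S → ℝ)
    (hVstarEnd : ∀ s, Vstar (H + 1) s = 0)
    (hQstar : ∀ h ∈ Finset.Icc 1 H, ∀ s a,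
      Qstar h s a = r h s a + ∑ s', P h s a s' * Vstar (h + 1) s')
    (hVstar : ∀ h ∈ Finset.Icc 1 H, ∀ s, Vstar h s = ⨆ a, Qstar h s a)
    -- concentration assumption
    (hconc : ∀ h ∈ Finset.Icc 1 H, ∀ s a,
      |φ s a ⬝ᵥ w h - ∑ s', P h s a s' * V (h + 1) s'| ≤ u h s a) :
    ∀ h ∈ Finset.Icc 1 H, ∀ s a,
      Qstar h s a ≤ Q h s a ∧
      Q h s a ≤ r h s a + (∑ s', P h s a s' * V (h + 1) s') + 2 * u h s a := by
  intro h hh s a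
  refine ⟨optimalQ_le_clippedQ (est := fun h s a => φ s a ⬝ᵥ w h) hP0 hP1
    (fun h hh s a => (hr h hh s a).2) hVend hQdef hVdef hVstarEnd hQstar hVstar hconc h hh s a, ?_⟩
  rw [hQdef h hh]
  exact min_le_of_abs_sub_le (hconc h hh s a)

theorem stmt_1 {S A : Type*} [Fintype S] [Nonempty S] [Fintype A] [Nonempty A]
    (H d : ℕ) (hH : 1 ≤ H)
    -- transition kernels
    (P : ℕ → S → A → S → ℝ)
    (hP0 : ∀ h ∈ Finset.Icc 1 H, ∀ s a s', 0 ≤ P h s a s')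
    (hP1 : ∀ h ∈ Finset.Icc 1 H, ∀ s a, ∑ s', P h s a s' = 1)
    -- rewards in [0,1]
    (r : ℕ → S → A → ℝ)
    (hr : ∀ h ∈ Finset.Icc 1 H, ∀ s a, r h s a ∈ Set.Icc (0 : ℝ) 1)
    -- feature map, weight vectors and nonnegative bonus functions
    (φ : S → A → Fin d → ℝ) (w : ℕ → Fin d → ℝ)
    (u : ℕ → S → A → ℝ)
    (hu0 : ∀ h ∈ Finset.Icc 1 H, ∀ s a, 0 ≤ u h s a)
    -- backward-defined estimates: Q_{H+1} ≡ 0, V_{H+1} ≡ 0,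
    -- Q_h = min{⟨φ, w_h⟩ + r_h + u_h, H}, V_h = max_a Q_h
    (Q : ℕ → S → A → ℝ) (V : ℕ → S → ℝ)
    (hQend : ∀ s a, Q (H + 1) s a = 0)
    (hVend : ∀ s, V (H + 1) s = 0)
    (hQdef : ∀ h ∈ Finset.Icc 1 H, ∀ s a,
      Q h s a = min (φ s a ⬝ᵥ w h + r h s a + u h s a) (H : ℝ))
    (hVdef : ∀ h ∈ Finset.Icc 1 H, ∀ s, V h s = ⨆ a, Q h s a)
    -- optimal value functions for reward r
    (Qstar : ℕ → S → A → ℝ) (Vstar : ℕ → S → ℝ)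
    (hVstarEnd : ∀ s, Vstar (H + 1) s = 0)
    (hQstar : ∀ h ∈ Finset.Icc 1 H, ∀ s a,
      Qstar h s a = r h s a + ∑ s', P h s a s' * Vstar (h + 1) s')
    (hVstar : ∀ h ∈ Finset.Icc 1 H, ∀ s, Vstar h s = ⨆ a, Qstar h s a)
    -- concentration assumption
    (hconc : ∀ h ∈ Finset.Icc 1 H, ∀ s a,
      |φ s a ⬝ᵥ w h - ∑ s', P h s a s' * V (h + 1) s'| ≤ u h s a) :
    ∀ h ∈ Finset.Icc 1 H, ∀ s a,
      Qstar h s a ≤ Q h s a ∧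
      Q h s a ≤ r h s a + (∑ s', P h s a s' * V (h + 1) s') + 2 * u h s a :=
  stmt_1_general H d P hP0 hP1 r hr φ w u Q V hVend hQdef hVdef Qstar Vstar hVstarEnd hQstar hVstar
    hconc
end

section
/- Let S and A be nonempty finite sets, H ≥ 1, let (P_h)_{h=1}^H be transition kernels, and let r = (r_h)_{h=1}^H be rewards with r_h(s,a) ∈ [0,1] for all h, s, a. Let φ : S × A → ℝ^d be any feature map, let w_h ∈ ℝ^d and bonus functions b_h : S × A → [0,∞) for h = 1,…,H be given, and define backward: V_{H+1} ≡ 0, Q_h(s,a) = min{r_h(s,a) + ⟨φ(s,a), w_h⟩ + b_h(s,a), H}, V_h(s) = max_{a∈A} Q_h(s,a). Assume that for all h ∈ {1,…,H} and all (s,a) ∈ S × A: Σ_{s'∈S} P_h(s'|s,a) V_{h+1}(s') ≤ ⟨φ(s,a), w_h⟩ + b_h(s,a). Then for all h ∈ {1,…,H} and all s ∈ S: V*_h(s,r) ≤ V_h(s). -/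
/-!
Backward induction on the stage `h`, carrying along the auxiliary bound `V*_h ≤ H + 1 - h`.
Below the truncation level the estimate `Q_h` dominates `Q*_h` by the domination hypothesis and
the induction hypothesis; the truncation at `H` is harmless because `Q*_h ≤ 1 + (H - h) ≤ H`.
-/

open Matrix Finset

section WeightedSum

variable {ι : Type*} [Fintype ι] {p f g : ι → ℝ}

lemma weightedSum_le_weightedSum (hp : ∀ i, 0 ≤ p i) (hfg : ∀ i, f i ≤ g i) :
    ∑ i, p i * f i ≤ ∑ i, p i * g i :=
  sum_le_sum fun i _ => mul_le_mul_of_nonneg_left (hfg i) (hp i)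

lemma weightedSum_le_of_le {c : ℝ} (hp : ∀ i, 0 ≤ p i) (hp1 : ∑ i, p i = 1)
    (hf : ∀ i, f i ≤ c) : ∑ i, p i * f i ≤ c :=
  calc ∑ i, p i * f i ≤ ∑ i, p i * c := weightedSum_le_weightedSum hp hf
    _ = c := by rw [← sum_mul, hp1, one_mul]

end WeightedSum

lemma backup_le_truncated_backup {S : Type*} [Fintype S] {p v vstar : S → ℝ} {r u c M : ℝ}
    (hp : ∀ s, 0 ≤ p s) (hp1 : ∑ s, p s = 1) (hr : r ≤ 1) (hcM : c + 1 ≤ M)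
    (hdom : ∑ s, p s * v s ≤ u) (hle : ∀ s, vstar s ≤ v s) (hc : ∀ s, vstar s ≤ c) :
    r + ∑ s, p s * vstar s ≤ min (r + u) M ∧ r + ∑ s, p s * vstar s ≤ c + 1 := by
  have hv : ∑ s, p s * vstar s ≤ ∑ s, p s * v s := weightedSum_le_weightedSum hp hle
  have hbound : ∑ s, p s * vstar s ≤ c := weightedSum_le_of_le hp hp1 hc
  exact ⟨le_min (by linarith) (by linarith), by linarith⟩

theorem stmt_2_general {S A : Type*} [Fintype S] [Fintype A] [Nonempty A]
    (H d : ℕ)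
    -- transition kernels
    (P : ℕ → S → A → S → ℝ)
    (hP0 : ∀ h ∈ Finset.Icc 1 H, ∀ s a s', 0 ≤ P h s a s')
    (hP1 : ∀ h ∈ Finset.Icc 1 H, ∀ s a, ∑ s', P h s a s' = 1)
    -- rewards in [0,1]
    (r : ℕ → S → A → ℝ)
    (hr : ∀ h ∈ Finset.Icc 1 H, ∀ s a, r h s a ∈ Set.Icc (0 : ℝ) 1)
    -- feature map, weight vectors and nonnegative bonus functions
    (φ : S → A → Fin d → ℝ) (w : ℕ → Fin d → ℝ)
    (b : ℕ → S → A → ℝ)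
    -- backward-defined estimates
    (Q : ℕ → S → A → ℝ) (V : ℕ → S → ℝ)
    (hVend : ∀ s, V (H + 1) s = 0)
    (hQdef : ∀ h ∈ Finset.Icc 1 H, ∀ s a,
      Q h s a = min (r h s a + φ s a ⬝ᵥ w h + b h s a) (H : ℝ))
    (hVdef : ∀ h ∈ Finset.Icc 1 H, ∀ s, V h s = ⨆ a, Q h s a)
    -- optimal value functions for reward r
    (Qstar : ℕ → S → A → ℝ) (Vstar : ℕ → S → ℝ)
    (hVstarEnd : ∀ s, Vstar (H + 1) s = 0)
    (hQstar : ∀ h ∈ Finset.Icc 1 H, ∀ s a,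
      Qstar h s a = r h s a + ∑ s', P h s a s' * Vstar (h + 1) s')
    (hVstar : ∀ h ∈ Finset.Icc 1 H, ∀ s, Vstar h s = ⨆ a, Qstar h s a)
    -- domination assumption
    (hdom : ∀ h ∈ Finset.Icc 1 H, ∀ s a,
      (∑ s', P h s a s' * V (h + 1) s') ≤ φ s a ⬝ᵥ w h + b h s a) :
    ∀ h ∈ Finset.Icc 1 H, ∀ s, Vstar h s ≤ V h s := by
  have hstep : ∀ h ∈ Icc 1 H, ∀ c : ℝ, c + 1 ≤ H →
      (∀ s, Vstar (h + 1) s ≤ V (h + 1) s ∧ Vstar (h + 1) s ≤ c) →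
      ∀ s, Vstar h s ≤ V h s ∧ Vstar h s ≤ c + 1 := by
    intro h hh c hc hnext s
    have hQ : ∀ a, Qstar h s a ≤ Q h s a ∧ Qstar h s a ≤ c + 1 := fun a => by
      rw [hQstar h hh, hQdef h hh, add_assoc (r h s a)]
      exact backup_le_truncated_backup (hP0 h hh s a) (hP1 h hh s a) (hr h hh s a).2 hc
        (hdom h hh s a) (fun s' => (hnext s').1) (fun s' => (hnext s').2)
    rw [hVstar h hh, hVdef h hh]
    exact ⟨ciSup_mono (Set.finite_range _).bddAbove fun a => (hQ a).1,
      ciSup_le fun a => (hQ a).2⟩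
  have hback : ∀ k ≤ H, ∀ s,
      Vstar (H + 1 - k) s ≤ V (H + 1 - k) s ∧ Vstar (H + 1 - k) s ≤ k := by
    intro k hk
    induction k with
    | zero => simp [hVstarEnd, hVend]
    | succ k ih =>
      rw [show H + 1 - (k + 1) = H - k by omega]
      push_cast
      refine hstep (H - k) (mem_Icc.2 ⟨by omega, by omega⟩) k (by exact_mod_cast hk) ?_
      rw [show H - k + 1 = H + 1 - k by omega]
      exact ih (by omega)
  intro h hh s
  obtain ⟨h1, hH⟩ := mem_Icc.1 hh
  simpa [show H + 1 - (H + 1 - h) = h by omega] using (hback (H + 1 - h) (by omega) s).1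

theorem stmt_2 {S A : Type*} [Fintype S] [Nonempty S] [Fintype A] [Nonempty A]
    (H d : ℕ) (hH : 1 ≤ H)
    -- transition kernels
    (P : ℕ → S → A → S → ℝ)
    (hP0 : ∀ h ∈ Finset.Icc 1 H, ∀ s a s', 0 ≤ P h s a s')
    (hP1 : ∀ h ∈ Finset.Icc 1 H, ∀ s a, ∑ s', P h s a s' = 1)
    -- rewards in [0,1]
    (r : ℕ → S → A → ℝ)
    (hr : ∀ h ∈ Finset.Icc 1 H, ∀ s a, r h s a ∈ Set.Icc (0 : ℝ) 1)
    -- feature map, weight vectors and nonnegative bonus functions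
    (φ : S → A → Fin d → ℝ) (w : ℕ → Fin d → ℝ)
    (b : ℕ → S → A → ℝ)
    (hb0 : ∀ h ∈ Finset.Icc 1 H, ∀ s a, 0 ≤ b h s a)
    -- backward-defined estimates
    (Q : ℕ → S → A → ℝ) (V : ℕ → S → ℝ)
    (hVend : ∀ s, V (H + 1) s = 0)
    (hQdef : ∀ h ∈ Finset.Icc 1 H, ∀ s a,
      Q h s a = min (r h s a + φ s a ⬝ᵥ w h + b h s a) (H : ℝ))
    (hVdef : ∀ h ∈ Finset.Icc 1 H, ∀ s, V h s = ⨆ a, Q h s a)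
    -- optimal value functions for reward r
    (Qstar : ℕ → S → A → ℝ) (Vstar : ℕ → S → ℝ)
    (hVstarEnd : ∀ s, Vstar (H + 1) s = 0)
    (hQstar : ∀ h ∈ Finset.Icc 1 H, ∀ s a,
      Qstar h s a = r h s a + ∑ s', P h s a s' * Vstar (h + 1) s')
    (hVstar : ∀ h ∈ Finset.Icc 1 H, ∀ s, Vstar h s = ⨆ a, Qstar h s a)
    -- domination assumption
    (hdom : ∀ h ∈ Finset.Icc 1 H, ∀ s a,
      (∑ s', P h s a s' * V (h + 1) s') ≤ φ s a ⬝ᵥ w h + b h s a) :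
    ∀ h ∈ Finset.Icc 1 H, ∀ s, Vstar h s ≤ V h s :=
  stmt_2_general H d P hP0 hP1 r hr φ w b Q V hVend hQdef hVdef Qstar Vstar hVstarEnd hQstar hVstar
    hdom
end

section
/- Let S and A be nonempty finite sets, H ≥ 1, and let P_h : S × A → S (h = 1,…,H) be deterministic transition functions. Let s*_1,…,s*_H ∈ S and a*_1,…,a*_H ∈ A satisfy s*_{h+1} = P_h(s*_h, a*_h) for 1 ≤ h ≤ H−1. Let Q_h : S × A → ℝ (h = 1,…,H) satisfy Q_h(s*_h, a*_h) = 1/2 and |Q_h(s,a)| ≤ 0.005 for every (s,a) ≠ (s*_h, a*_h). Define rewards by r_H(s,a) := Q_H(s,a) and, for h < H, r_h(s,a) := Q_h(s,a) − max_{a'∈A} Q_{h+1}(P_h(s,a), a'). Then: (i) the optimal value from s*_1 is V*_1(s*_1) = 1/2, attained by any policy π with π_h(s*_h) = a*_h for all h; (ii) every policy π with π_h(s*_h) ≠ a*_h for some h ∈ {1,…,H} satisfies V^π_1(s*_1) ≤ 0.005; in particular no such policy is 0.1-optimal from s*_1. -/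
/-!
The rewards are shaped so that `Q` itself is the optimal `Q`-function: the term
`- max_{a'} Q_{h+1}(P_h(s,a), a')` in `r_h` cancels the optimal continuation value, so
`V*_h = max_a Q_h` by backward induction, and in the same way `V^π_h(s) ≤ Q_h(s, π_h(s))`
for every policy. Along the hidden path the maximum of `Q_h(s*_h, ·)` is `1/2`, attained at `a*_h`,
so each step that follows the path contributes `1/2 - 1/2 = 0`: a policy keeps the value
`V^π_1(s*_1) = V^π_k(s*_k)` up to its first deviation `k`, where it is at most
`Q_k(s*_k, π_k(s*_k)) ≤ 0.005`, and gets `Q_H(s*_H, a*_H) = 1/2` if it never deviates.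
-/

open Finset

section ShapedReward

variable {S A : Type*} {H : ℕ} {P : ℕ → S → A → S} {Q r : ℕ → S → A → ℝ}

def IsShapedReward (H : ℕ) (P : ℕ → S → A → S) (Q r : ℕ → S → A → ℝ) : Prop :=
  (∀ s a, r H s a = Q H s a) ∧
    ∀ h, 1 ≤ h → h < H → ∀ s a, r h s a = Q h s a - ⨆ a', Q (h + 1) (P h s a) a'

def IsPolicyValue (H : ℕ) (P : ℕ → S → A → S) (r : ℕ → S → A → ℝ) (π : ℕ → S → A)
    (V : ℕ → S → ℝ) : Prop :=
  (∀ s, V (H + 1) s = 0) ∧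
    ∀ h ∈ Icc 1 H, ∀ s, V h s = r h s (π h s) + V (h + 1) (P h s (π h s))

theorem IsShapedReward.optValue_eq_iSup (hr : IsShapedReward H P Q r)
    {Qopt : ℕ → S → A → ℝ} {Vopt : ℕ → S → ℝ} (hVoptEnd : ∀ s, Vopt (H + 1) s = 0)
    (hQopt : ∀ h ∈ Icc 1 H, ∀ s a, Qopt h s a = r h s a + Vopt (h + 1) (P h s a))
    (hVopt : ∀ h ∈ Icc 1 H, ∀ s, Vopt h s = ⨆ a, Qopt h s a) {h : ℕ} (h1 : 1 ≤ h)
    (hH : h ≤ H) (s : S) : Vopt h s = ⨆ a, Q h s a := by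
  induction hH using Nat.decreasingInduction generalizing s with
  | self =>
    rw [hVopt H (mem_Icc.2 ⟨h1, le_rfl⟩)]
    exact iSup_congr fun a ↦ by
      rw [hQopt H (mem_Icc.2 ⟨h1, le_rfl⟩), hr.1, hVoptEnd, add_zero]
  | of_succ h hlt ih =>
    rw [hVopt h (mem_Icc.2 ⟨h1, hlt.le⟩)]
    exact iSup_congr fun a ↦ by
      rw [hQopt h (mem_Icc.2 ⟨h1, hlt.le⟩), hr.2 h h1 hlt, ih (by omega), sub_add_cancel]

theorem IsShapedReward.policyValue_eq_sub_add (hr : IsShapedReward H P Q r)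
    {π : ℕ → S → A} {V : ℕ → S → ℝ} (hV : IsPolicyValue H P r π V) {h : ℕ} (h1 : 1 ≤ h)
    (hlt : h < H) (s : S) :
    V h s = Q h s (π h s) - (⨆ a, Q (h + 1) (P h s (π h s)) a) + V (h + 1) (P h s (π h s)) := by
  rw [hV.2 h (mem_Icc.2 ⟨h1, hlt.le⟩), hr.2 h h1 hlt]

theorem IsShapedReward.policyValue_last (hr : IsShapedReward H P Q r)
    {π : ℕ → S → A} {V : ℕ → S → ℝ} (hV : IsPolicyValue H P r π V) (hH : 1 ≤ H) (s : S) :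
    V H s = Q H s (π H s) := by
  rw [hV.2 H (mem_Icc.2 ⟨hH, le_rfl⟩), hr.1, hV.1, add_zero]

theorem IsShapedReward.policyValue_le [Finite A] (hr : IsShapedReward H P Q r)
    {π : ℕ → S → A} {V : ℕ → S → ℝ} (hV : IsPolicyValue H P r π V) {h : ℕ} (h1 : 1 ≤ h)
    (hH : h ≤ H) (s : S) : V h s ≤ Q h s (π h s) := by
  induction hH using Nat.decreasingInduction generalizing s with
  | self => exact (hr.policyValue_last hV h1 s).le
  | of_succ h hlt ih =>
    set s' := P h s (π h s)
    have hnext : V (h + 1) s' ≤ ⨆ a, Q (h + 1) s' a :=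
      (ih (by omega) s').trans (le_ciSup (Finite.bddAbove_range _) _)
    rw [hr.policyValue_eq_sub_add hV h1 hlt]
    linarith

end ShapedReward

section HiddenPath

variable {S A : Type*} {H : ℕ} {P : ℕ → S → A → S} {Q r : ℕ → S → A → ℝ}
  {sstar : ℕ → S} {astar : ℕ → A}

theorem iSup_Q_hiddenPath
    (hQstarpath : ∀ h ∈ Icc 1 H, Q h (sstar h) (astar h) = 1 / 2)
    (hQsmall : ∀ h ∈ Icc 1 H, ∀ s a, (s, a) ≠ (sstar h, astar h) → |Q h s a| ≤ 0.005)
    {h : ℕ} (hh : h ∈ Icc 1 H) : ⨆ a, Q h (sstar h) a = 1 / 2 := by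
  have : Nonempty A := ⟨astar h⟩
  refine IsLUB.ciSup_eq <| IsGreatest.isLUB
    ⟨⟨astar h, hQstarpath h hh⟩, Set.forall_mem_range.2 fun a ↦ ?_⟩
  by_cases ha : a = astar h
  · rw [ha, hQstarpath h hh]
  · have := (abs_le.1 (hQsmall h hh (sstar h) a (by simp [ha]))).2
    linarith

theorem IsShapedReward.policyValue_hiddenPath (hr : IsShapedReward H P Q r)
    (hstar : ∀ h, 1 ≤ h → h + 1 ≤ H → sstar (h + 1) = P h (sstar h) (astar h))
    (hQstarpath : ∀ h ∈ Icc 1 H, Q h (sstar h) (astar h) = 1 / 2)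
    (hQsmall : ∀ h ∈ Icc 1 H, ∀ s a, (s, a) ≠ (sstar h, astar h) → |Q h s a| ≤ 0.005)
    {π : ℕ → S → A} {V : ℕ → S → ℝ} (hV : IsPolicyValue H P r π V) {k : ℕ} (hk1 : 1 ≤ k)
    (hkH : k ≤ H) (hfollow : ∀ h, 1 ≤ h → h < k → π h (sstar h) = astar h) :
    V 1 (sstar 1) = V k (sstar k) := by
  induction k, hk1 using Nat.le_induction with
  | base => rfl
  | succ k hk1 ih =>
    have hk : k ∈ Icc 1 H := mem_Icc.2 ⟨hk1, by omega⟩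
    have hπ := hfollow k hk1 (by omega)
    rw [ih (by omega) fun h h1 hlt ↦ hfollow h h1 (by omega),
      hr.policyValue_eq_sub_add hV hk1 (by omega), hπ, ← hstar k hk1 hkH,
      iSup_Q_hiddenPath hQstarpath hQsmall (mem_Icc.2 ⟨by omega, hkH⟩), hQstarpath k hk,
      sub_self, zero_add]

end HiddenPath

theorem stmt_8_general {S A : Type*} [Fintype A]
    (H : ℕ) (hH : 1 ≤ H)
    -- deterministic transition functions
    (P : ℕ → S → A → S)
    -- the hidden optimal trajectory
    (sstar : ℕ → S) (astar : ℕ → A)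
    (hstar : ∀ h, 1 ≤ h → h + 1 ≤ H → sstar (h + 1) = P h (sstar h) (astar h))
    -- the prescribed Q functions
    (Q : ℕ → S → A → ℝ)
    (hQstarpath : ∀ h ∈ Finset.Icc 1 H, Q h (sstar h) (astar h) = 1 / 2)
    (hQsmall : ∀ h ∈ Finset.Icc 1 H, ∀ s a,
      (s, a) ≠ (sstar h, astar h) → |Q h s a| ≤ 0.005)
    -- the rewards defined from Q
    (r : ℕ → S → A → ℝ)
    (hrH : ∀ s a, r H s a = Q H s a)
    (hrlt : ∀ h, 1 ≤ h → h < H → ∀ s a,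
      r h s a = Q h s a - ⨆ a', Q (h + 1) (P h s a) a')
    -- optimal value functions of the deterministic system (S, A, P, r, H)
    (Qopt : ℕ → S → A → ℝ) (Vopt : ℕ → S → ℝ)
    (hVoptEnd : ∀ s, Vopt (H + 1) s = 0)
    (hQopt : ∀ h ∈ Finset.Icc 1 H, ∀ s a,
      Qopt h s a = r h s a + Vopt (h + 1) (P h s a))
    (hVopt : ∀ h ∈ Finset.Icc 1 H, ∀ s, Vopt h s = ⨆ a, Qopt h s a) :
    -- (i) the optimal value from s*_1 is 1/2 ...
    Vopt 1 (sstar 1) = 1 / 2 ∧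
    -- ... attained by any policy following the hidden trajectory
    (∀ (π : ℕ → S → A) (Vpi : ℕ → S → ℝ),
      (∀ h ∈ Finset.Icc 1 H, π h (sstar h) = astar h) →
      (∀ s, Vpi (H + 1) s = 0) →
      (∀ h ∈ Finset.Icc 1 H, ∀ s,
        Vpi h s = r h s (π h s) + Vpi (h + 1) (P h s (π h s))) →
      Vpi 1 (sstar 1) = Vopt 1 (sstar 1)) ∧
    -- (ii) any deviating policy has value at most 0.005, hence is not 0.1-optimal
    (∀ (π : ℕ → S → A) (Vpi : ℕ → S → ℝ),
      (∃ h ∈ Finset.Icc 1 H, π h (sstar h) ≠ astar h) →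
      (∀ s, Vpi (H + 1) s = 0) →
      (∀ h ∈ Finset.Icc 1 H, ∀ s,
        Vpi h s = r h s (π h s) + Vpi (h + 1) (P h s (π h s))) →
      Vpi 1 (sstar 1) ≤ 0.005 ∧ Vpi 1 (sstar 1) < Vopt 1 (sstar 1) - 0.1) := by
  have hr : IsShapedReward H P Q r := ⟨hrH, hrlt⟩
  have hV1 : Vopt 1 (sstar 1) = 1 / 2 := by
    rw [hr.optValue_eq_iSup hVoptEnd hQopt hVopt le_rfl hH,
      iSup_Q_hiddenPath hQstarpath hQsmall (mem_Icc.2 ⟨le_rfl, hH⟩)]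
  refine ⟨hV1, fun π Vpi hfollow hend hrec ↦ ?_, fun π Vpi hdev hend hrec ↦ ?_⟩
  · have hV : IsPolicyValue H P r π Vpi := ⟨hend, hrec⟩
    have hHmem : H ∈ Icc 1 H := mem_Icc.2 ⟨hH, le_rfl⟩
    rw [hr.policyValue_hiddenPath hstar hQstarpath hQsmall hV hH le_rfl
        fun h h1 hlt ↦ hfollow h (mem_Icc.2 ⟨h1, hlt.le⟩),
      hr.policyValue_last hV hH, hfollow H hHmem, hQstarpath H hHmem, hV1]
  · have hV : IsPolicyValue H P r π Vpi := ⟨hend, hrec⟩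
    classical
    obtain ⟨hkmem, hkdev⟩ := Nat.find_spec hdev
    set k := Nat.find hdev
    obtain ⟨hk1, hkH⟩ := mem_Icc.1 hkmem
    have hfollow : ∀ h, 1 ≤ h → h < k → π h (sstar h) = astar h := fun h h1 hlt ↦ by
      by_contra hne
      exact Nat.find_min hdev hlt ⟨mem_Icc.2 ⟨h1, by omega⟩, hne⟩
    have hle : Vpi 1 (sstar 1) ≤ 0.005 := calc
      Vpi 1 (sstar 1) = Vpi k (sstar k) :=
        hr.policyValue_hiddenPath hstar hQstarpath hQsmall hV hk1 hkH hfollow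
      _ ≤ Q k (sstar k) (π k (sstar k)) := hr.policyValue_le hV hk1 hkH _
      _ ≤ 0.005 := (le_abs_self _).trans (hQsmall k hkmem _ _ (by simp [hkdev]))
    refine ⟨hle, ?_⟩
    rw [hV1]
    linarith

theorem stmt_8 {S A : Type*} [Fintype S] [Nonempty S] [Fintype A] [Nonempty A]
    (H : ℕ) (hH : 1 ≤ H)
    -- deterministic transition functions
    (P : ℕ → S → A → S)
    -- the hidden optimal trajectory
    (sstar : ℕ → S) (astar : ℕ → A)
    (hstar : ∀ h, 1 ≤ h → h + 1 ≤ H → sstar (h + 1) = P h (sstar h) (astar h))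
    -- the prescribed Q functions
    (Q : ℕ → S → A → ℝ)
    (hQstarpath : ∀ h ∈ Finset.Icc 1 H, Q h (sstar h) (astar h) = 1 / 2)
    (hQsmall : ∀ h ∈ Finset.Icc 1 H, ∀ s a,
      (s, a) ≠ (sstar h, astar h) → |Q h s a| ≤ 0.005)
    -- the rewards defined from Q
    (r : ℕ → S → A → ℝ)
    (hrH : ∀ s a, r H s a = Q H s a)
    (hrlt : ∀ h, 1 ≤ h → h < H → ∀ s a,
      r h s a = Q h s a - ⨆ a', Q (h + 1) (P h s a) a')
    -- optimal value functions of the deterministic system (S, A, P, r, H)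
    (Qopt : ℕ → S → A → ℝ) (Vopt : ℕ → S → ℝ)
    (hVoptEnd : ∀ s, Vopt (H + 1) s = 0)
    (hQopt : ∀ h ∈ Finset.Icc 1 H, ∀ s a,
      Qopt h s a = r h s a + Vopt (h + 1) (P h s a))
    (hVopt : ∀ h ∈ Finset.Icc 1 H, ∀ s, Vopt h s = ⨆ a, Qopt h s a) :
    -- (i) the optimal value from s*_1 is 1/2 ...
    Vopt 1 (sstar 1) = 1 / 2 ∧
    -- ... attained by any policy following the hidden trajectory
    (∀ (π : ℕ → S → A) (Vpi : ℕ → S → ℝ),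
      (∀ h ∈ Finset.Icc 1 H, π h (sstar h) = astar h) →
      (∀ s, Vpi (H + 1) s = 0) →
      (∀ h ∈ Finset.Icc 1 H, ∀ s,
        Vpi h s = r h s (π h s) + Vpi (h + 1) (P h s (π h s))) →
      Vpi 1 (sstar 1) = Vopt 1 (sstar 1)) ∧
    -- (ii) any deviating policy has value at most 0.005, hence is not 0.1-optimal
    (∀ (π : ℕ → S → A) (Vpi : ℕ → S → ℝ),
      (∃ h ∈ Finset.Icc 1 H, π h (sstar h) ≠ astar h) →
      (∀ s, Vpi (H + 1) s = 0) →
      (∀ h ∈ Finset.Icc 1 H, ∀ s,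
        Vpi h s = r h s (π h s) + Vpi (h + 1) (P h s (π h s))) →
      Vpi 1 (sstar 1) ≤ 0.005 ∧ Vpi 1 (sstar 1) < Vopt 1 (sstar 1) - 0.1) :=
  stmt_8_general H hH P sstar astar hstar Q hQstarpath hQsmall r hrH hrlt Qopt Vopt hVoptEnd hQopt
    hVopt
end

section
/- Let S and A be nonempty finite sets, H ≥ 1, P_h : S × A → S (h = 1,…,H) deterministic transition functions, r_h : S × A → ℝ rewards, and φ : S × A → ℝ^d a feature map. Assume linear Q*: for each h there exists θ_h ∈ ℝ^d with Q*_h(s,a) = ⟨φ(s,a), θ_h⟩ for all (s,a). For each h, let B_h ⊆ S × A be a set whose feature vectors span the linear span of {φ(s,a) : (s,a) ∈ S × A}. Suppose functions Q̂_h : S × A → ℝ (h = 1,…,H) satisfy: (i) each Q̂_h is linear in the features, i.e., Q̂_h(s,a) = ⟨φ(s,a), ŵ_h⟩ for some ŵ_h ∈ ℝ^d; and (ii) with Q̂_{H+1} ≡ 0, for every (s,a) ∈ B_h: Q̂_h(s,a) = r_h(s,a) + max_{a'∈A} Q̂_{h+1}(P_h(s,a), a'). Then Q̂_h(s,a) =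 Q*_h(s,a) for all h and all (s,a) ∈ S × A, and any policy π with π_h(s) ∈ argmax_{a∈A} Q̂_h(s,a) satisfies V^π_1(s) = V*_1(s) for all s ∈ S. -/
/-!
Backward induction on the level `h`. If `max_{a'} Q̂_{h+1} = V*_{h+1}`, then the Bellman
equations for `Q̂_h` on `B_h` say exactly that `Q̂_h` and `Q*_h` agree on `B_h`; both are
linear functionals of the features, and the features of `B_h` span all features, so they agree
everywhere, whence also `max_a Q̂_h = V*_h`. A greedy policy then attains `V*` at every level,
again by backward induction.
-/

open Matrix

theorem Nat.decreasing_induction_Icc {p : ℕ → Prop} {a b : ℕ} (top : p (b + 1))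
    (step : ∀ n ∈ Finset.Icc a b, p (n + 1) → p n) : ∀ n ∈ Finset.Icc a (b + 1), p n := by
  intro n hn
  obtain ⟨han, hnb⟩ := Finset.mem_Icc.mp hn
  refine Nat.decreasingInduction (motive := fun n _ => a ≤ n → p n)
    (fun k hk ih hak => step k (Finset.mem_Icc.mpr ⟨hak, by omega⟩) (ih (by omega)))
    (fun _ => top) hnb han

theorem Matrix.dotProduct_eq_of_mem_span {R n : Type*} [CommSemiring R] [Fintype n]
    {s : Set (n → R)} {w θ : n → R} (hs : ∀ v ∈ s, v ⬝ᵥ w = v ⬝ᵥ θ) {x : n → R}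
    (hx : x ∈ Submodule.span R s) : x ⬝ᵥ w = x ⬝ᵥ θ :=
  LinearMap.eqOn_span (f := (dotProductBilin R R).flip w) (g := (dotProductBilin R R).flip θ)
    hs hx

theorem eq_of_eqOn_of_features_span {ι R n : Type*} [CommSemiring R] [Fintype n]
    {φ : ι → n → R} {f g : ι → R} {B : Set ι}
    (hf : ∃ w, ∀ i, f i = φ i ⬝ᵥ w) (hg : ∃ θ, ∀ i, g i = φ i ⬝ᵥ θ)
    (hspan : ∀ i, φ i ∈ Submodule.span R (φ '' B)) (hB : Set.EqOn f g B) : f = g := by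
  obtain ⟨w, hw⟩ := hf
  obtain ⟨θ, hθ⟩ := hg
  have hspan_eq : ∀ v ∈ φ '' B, v ⬝ᵥ w = v ⬝ᵥ θ := by
    rintro _ ⟨i, hi, rfl⟩
    rw [← hw, ← hθ]
    exact hB hi
  funext i
  rw [hw, hθ]
  exact dotProduct_eq_of_mem_span hspan_eq (hspan i)

theorem ciSup_eq_of_forall_le_apply {ι α : Type*} [ConditionallyCompleteLattice α]
    {f : ι → α} {i : ι} (hi : ∀ j, f j ≤ f i) : ⨆ j, f j = f i :=
  have : Nonempty ι := ⟨i⟩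
  le_antisymm (ciSup_le hi) (le_ciSup ⟨f i, Set.forall_mem_range.mpr hi⟩ i)

theorem stmt_11_general {S A : Type*}
    (H d : ℕ)
    -- deterministic transition functions and rewards
    (P : ℕ → S → A → S)
    (r : ℕ → S → A → ℝ)
    -- feature map
    (φ : S → A → Fin d → ℝ)
    -- optimal value functions of the deterministic system (S, A, P, r, H)
    (Qstar : ℕ → S → A → ℝ) (Vstar : ℕ → S → ℝ)
    (hVstarEnd : ∀ s, Vstar (H + 1) s = 0)
    (hQstar : ∀ h ∈ Finset.Icc 1 H, ∀ s a,
      Qstar h s a = r h s a + Vstar (h + 1) (P h s a))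
    (hVstar : ∀ h ∈ Finset.Icc 1 H, ∀ s, Vstar h s = ⨆ a, Qstar h s a)
    -- linear Q* assumption
    (hlinQstar : ∀ h ∈ Finset.Icc 1 H, ∃ θ : Fin d → ℝ, ∀ s a, Qstar h s a = φ s a ⬝ᵥ θ)
    -- for each level, a set whose features span the span of all features
    (B : ℕ → Set (S × A))
    (hspan : ∀ h ∈ Finset.Icc 1 H, ∀ s a,
      φ s a ∈ Submodule.span ℝ ((fun p : S × A => φ p.1 p.2) '' B h))
    -- the estimated Q functions: linear in features and Bellman-consistent on B_h
    (Qhat : ℕ → S → A → ℝ)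
    (hQhatEnd : ∀ s a, Qhat (H + 1) s a = 0)
    (hQhatLin : ∀ h ∈ Finset.Icc 1 H, ∃ w : Fin d → ℝ, ∀ s a, Qhat h s a = φ s a ⬝ᵥ w)
    (hQhatBellman : ∀ h ∈ Finset.Icc 1 H, ∀ p ∈ B h,
      Qhat h p.1 p.2 = r h p.1 p.2 + ⨆ a', Qhat (h + 1) (P h p.1 p.2) a') :
    (∀ h ∈ Finset.Icc 1 H, ∀ s a, Qhat h s a = Qstar h s a) ∧
    (∀ (π : ℕ → S → A) (Vpi : ℕ → S → ℝ),
      -- π is greedy with respect to Q̂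
      (∀ h ∈ Finset.Icc 1 H, ∀ s a, Qhat h s a ≤ Qhat h s (π h s)) →
      -- Vpi is the value function of π
      (∀ s, Vpi (H + 1) s = 0) →
      (∀ h ∈ Finset.Icc 1 H, ∀ s,
        Vpi h s = r h s (π h s) + Vpi (h + 1) (P h s (π h s))) →
      ∀ s, Vpi 1 s = Vstar 1 s) := by
  have hQ_of_next : ∀ h ∈ Finset.Icc 1 H, (∀ s, ⨆ a, Qhat (h + 1) s a = Vstar (h + 1) s) →
      ∀ s a, Qhat h s a = Qstar h s a := by
    intro h hh hnext s a
    have hB : Set.EqOn (fun p : S × A => Qhat h p.1 p.2) (fun p => Qstar h p.1 p.2) (B h) :=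
      fun p hp => by dsimp only; rw [hQhatBellman h hh p hp, hQstar h hh, hnext]
    obtain ⟨w, hw⟩ := hQhatLin h hh
    obtain ⟨θ, hθ⟩ := hlinQstar h hh
    exact congrFun (eq_of_eqOn_of_features_span (φ := fun p : S × A => φ p.1 p.2)
      ⟨w, fun p => hw p.1 p.2⟩ ⟨θ, fun p => hθ p.1 p.2⟩ (fun p => hspan h hh p.1 p.2) hB)
      (s, a)
  have hV : ∀ h ∈ Finset.Icc 1 (H + 1), ∀ s, ⨆ a, Qhat h s a = Vstar h s :=
    Nat.decreasing_induction_Icc (by simp [hQhatEnd, hVstarEnd])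
      fun h hh hnext s => by simp_rw [hQ_of_next h hh hnext, hVstar h hh]
  have hQ : ∀ h ∈ Finset.Icc 1 H, ∀ s a, Qhat h s a = Qstar h s a := fun h hh =>
    hQ_of_next h hh (hV (h + 1) (by rw [Finset.mem_Icc] at hh ⊢; omega))
  refine ⟨hQ, fun π Vpi hgreedy hVpiEnd hVpi => ?_⟩
  have hVpi_eq : ∀ h ∈ Finset.Icc 1 (H + 1), ∀ s, Vpi h s = Vstar h s :=
    Nat.decreasing_induction_Icc (by simp [hVpiEnd, hVstarEnd])
      fun h hh hnext s => by
        rw [hVpi h hh, hnext, ← hQstar h hh, ← hQ h hh,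
          ← hV h (Finset.Icc_subset_Icc_right H.le_succ hh),
          ciSup_eq_of_forall_le_apply (hgreedy h hh s)]
  exact hVpi_eq 1 (by simp)

theorem stmt_11 {S A : Type*} [Fintype S] [Nonempty S] [Fintype A] [Nonempty A]
    (H d : ℕ) (hH : 1 ≤ H)
    -- deterministic transition functions and rewards
    (P : ℕ → S → A → S)
    (r : ℕ → S → A → ℝ)
    -- feature map
    (φ : S → A → Fin d → ℝ)
    -- optimal value functions of the deterministic system (S, A, P, r, H)
    (Qstar : ℕ → S → A → ℝ) (Vstar : ℕ → S → ℝ)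
    (hVstarEnd : ∀ s, Vstar (H + 1) s = 0)
    (hQstar : ∀ h ∈ Finset.Icc 1 H, ∀ s a,
      Qstar h s a = r h s a + Vstar (h + 1) (P h s a))
    (hVstar : ∀ h ∈ Finset.Icc 1 H, ∀ s, Vstar h s = ⨆ a, Qstar h s a)
    -- linear Q* assumption
    (hlinQstar : ∀ h ∈ Finset.Icc 1 H, ∃ θ : Fin d → ℝ, ∀ s a, Qstar h s a = φ s a ⬝ᵥ θ)
    -- for each level, a set whose features span the span of all features
    (B : ℕ → Set (S × A))
    (hspan : ∀ h ∈ Finset.Icc 1 H, ∀ s a,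
      φ s a ∈ Submodule.span ℝ ((fun p : S × A => φ p.1 p.2) '' B h))
    -- the estimated Q functions: linear in features and Bellman-consistent on B_h
    (Qhat : ℕ → S → A → ℝ)
    (hQhatEnd : ∀ s a, Qhat (H + 1) s a = 0)
    (hQhatLin : ∀ h ∈ Finset.Icc 1 H, ∃ w : Fin d → ℝ, ∀ s a, Qhat h s a = φ s a ⬝ᵥ w)
    (hQhatBellman : ∀ h ∈ Finset.Icc 1 H, ∀ p ∈ B h,
      Qhat h p.1 p.2 = r h p.1 p.2 + ⨆ a', Qhat (h + 1) (P h p.1 p.2) a') :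
    (∀ h ∈ Finset.Icc 1 H, ∀ s a, Qhat h s a = Qstar h s a) ∧
    (∀ (π : ℕ → S → A) (Vpi : ℕ → S → ℝ),
      -- π is greedy with respect to Q̂
      (∀ h ∈ Finset.Icc 1 H, ∀ s a, Qhat h s a ≤ Qhat h s (π h s)) →
      -- Vpi is the value function of π
      (∀ s, Vpi (H + 1) s = 0) →
      (∀ h ∈ Finset.Icc 1 H, ∀ s,
        Vpi h s = r h s (π h s) + Vpi (h + 1) (P h s (π h s))) →
      ∀ s, Vpi 1 s = Vstar 1 s) :=
  stmt_11_general H d P r φ Qstar Vstar hVstarEnd hQstar hVstar hlinQstar B hspan Qhat hQhatEnd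
    hQhatLin hQhatBellman
end

section
/- Let d, K ≥ 1 and let φ_1, …, φ_K ∈ ℝ^d satisfy ‖φ_k‖_2 ≤ 1 for all k. For each k ∈ {1,…,K}, let Λ_k := I_d + Σ_{τ=1}^{k−1} φ_τ φ_τ^⊤. Then Σ_{k=1}^{K} φ_k^⊤ Λ_k^{−1} φ_k ≤ 2 d · log(1 + K/d). -/
/-!
By the matrix determinant lemma, `det Λ_{k+1} = det Λ_k · (1 + φ_kᵀ Λ_k⁻¹ φ_k)`, so the sum of
`log (1 + φ_kᵀ Λ_k⁻¹ φ_k)` telescopes to `log det Λ_{K+1}`. Since `Λ_k ≥ I`, each bonus lies in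
`[0, ‖φ_k‖²] ⊆ [0, 1]`, where `u ≤ 2 log (1 + u)`. Finally, concavity of `log` applied to the
eigenvalues gives `log det Λ_{K+1} ≤ d log (tr Λ_{K+1} / d) ≤ d log (1 + K / d)`.
-/

open Matrix Finset

lemma Real.le_two_mul_log_one_add {u : ℝ} (h₀ : 0 ≤ u) (h₂ : u ≤ 2) :
    u ≤ 2 * Real.log (1 + u) := by
  have h := Real.le_log_one_add_of_nonneg h₀
  rw [div_le_iff₀ (by linarith)] at h
  nlinarith

namespace Matrix

variable {n : Type*} [Fintype n]

theorem posSemidef_sum_vecMulVec_self {ι : Type*} (s : Finset ι) (v : ι → n → ℝ) :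
    (∑ i ∈ s, vecMulVec (v i) (v i)).PosSemidef :=
  posSemidef_sum _ fun i _ => by simpa using posSemidef_vecMulVec_self_star (v i)

variable [DecidableEq n]

theorem det_add_vecMulVec {R : Type*} [CommRing R] {A : Matrix n n R} (hA : IsUnit A.det)
    (u v : n → R) : (A + vecMulVec u v).det = A.det * (1 + v ⬝ᵥ (A⁻¹ *ᵥ u)) := by
  rw [vecMulVec_eq Unit, det_add_replicateCol_mul_replicateRow hA, Matrix.mul_assoc,
    ← replicateCol_mulVec, det_unique (1 + _), add_apply, one_apply_eq,
    replicateRow_mul_replicateCol_apply]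

theorem dotProduct_inv_one_add_mulVec_le {S : Matrix n n ℝ} (hS : S.PosSemidef) (x : n → ℝ) :
    x ⬝ᵥ ((1 + S)⁻¹ *ᵥ x) ≤ x ⬝ᵥ x := by
  set y := (1 + S)⁻¹ *ᵥ x
  have hx : x = (1 + S) *ᵥ y := by
    rw [mulVec_mulVec, mul_nonsing_inv _ (PosDef.one.add_posSemidef hS).det_pos.ne'.isUnit,
      one_mulVec]
  rw [add_mulVec, one_mulVec] at hx
  have hSy : 0 ≤ y ⬝ᵥ (S *ᵥ y) := by simpa using hS.dotProduct_mulVec_nonneg y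
  have hSS : 0 ≤ (S *ᵥ y) ⬝ᵥ (S *ᵥ y) := by simpa using dotProduct_star_self_nonneg (S *ᵥ y)
  rw [hx]
  simp only [add_dotProduct, dotProduct_add, dotProduct_comm (S *ᵥ y) y]
  linarith

theorem PosDef.log_det_le {A : Matrix n n ℝ} (hA : A.PosDef) :
    Real.log A.det ≤ Fintype.card n * Real.log (A.trace / Fintype.card n) := by
  rcases isEmpty_or_nonempty n with hn | hn
  · simp
  have hcard : (0 : ℝ) < Fintype.card n := by exact_mod_cast Fintype.card_pos
  have hjensen := StrictConcaveOn.concaveOn strictConcaveOn_log_Ioi |>.le_map_sum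
    (t := univ) (w := fun _ => (Fintype.card n : ℝ)⁻¹) (p := hA.1.eigenvalues)
    (fun _ _ => by positivity) (by simp [hcard.ne']) (fun i _ => hA.eigenvalues_pos i)
  simp only [smul_eq_mul, ← mul_sum] at hjensen
  rw [← Real.log_prod (fun i _ => (hA.eigenvalues_pos i).ne')] at hjensen
  rw [hA.1.det_eq_prod_eigenvalues, hA.1.trace_eq_sum_eigenvalues]
  simp only [RCLike.ofReal_real_eq_id, id]
  rw [div_eq_inv_mul]
  rwa [inv_mul_le_iff₀ hcard] at hjensen

end Matrix

section RegularizedGram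

variable {n : Type*} [DecidableEq n] (φ : ℕ → n → ℝ)

/-- `regularizedGram φ k = I + Σ_{τ=1}^{k} φ_τ φ_τᵀ`, so that the paper's `Λ_k` is
`regularizedGram φ (k - 1)`. -/
noncomputable def regularizedGram (k : ℕ) : Matrix n n ℝ :=
  1 + ∑ τ ∈ Icc 1 k, vecMulVec (φ τ) (φ τ)

theorem regularizedGram_succ (k : ℕ) :
    regularizedGram φ (k + 1) = regularizedGram φ k + vecMulVec (φ (k + 1)) (φ (k + 1)) := by
  rw [regularizedGram, regularizedGram, sum_Icc_succ_top (by omega), add_assoc]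

variable [Fintype n]

theorem posDef_regularizedGram (k : ℕ) : (regularizedGram φ k).PosDef :=
  PosDef.one.add_posSemidef (posSemidef_sum_vecMulVec_self _ φ)

theorem det_regularizedGram (k : ℕ) :
    (regularizedGram φ k).det =
      ∏ τ ∈ Icc 1 k, (1 + φ τ ⬝ᵥ ((regularizedGram φ (τ - 1))⁻¹ *ᵥ φ τ)) := by
  induction k with
  | zero => simp [regularizedGram]
  | succ k ih =>
    rw [prod_Icc_succ_top (by omega), ← ih, regularizedGram_succ,
      det_add_vecMulVec (posDef_regularizedGram φ k).det_pos.ne'.isUnit, Nat.add_sub_cancel]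

theorem trace_regularizedGram (k : ℕ) :
    (regularizedGram φ k).trace = Fintype.card n + ∑ τ ∈ Icc 1 k, φ τ ⬝ᵥ φ τ := by
  simp [regularizedGram, trace_sum]

theorem dotProduct_inv_regularizedGram_mulVec_nonneg (k : ℕ) (x : n → ℝ) :
    0 ≤ x ⬝ᵥ ((regularizedGram φ k)⁻¹ *ᵥ x) := by
  simpa using (posDef_regularizedGram φ k).inv.posSemidef.dotProduct_mulVec_nonneg x

theorem dotProduct_inv_regularizedGram_mulVec_le (k : ℕ) (x : n → ℝ) :
    x ⬝ᵥ ((regularizedGram φ k)⁻¹ *ᵥ x) ≤ x ⬝ᵥ x :=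
  dotProduct_inv_one_add_mulVec_le (posSemidef_sum_vecMulVec_self _ φ) x

variable {φ}

theorem log_det_regularizedGram_le {K : ℕ} (hφ : ∀ τ ∈ Icc 1 K, φ τ ⬝ᵥ φ τ ≤ 1) :
    Real.log (regularizedGram φ K).det ≤
      Fintype.card n * Real.log (1 + K / Fintype.card n) := by
  refine (posDef_regularizedGram φ K).log_det_le.trans ?_
  rcases isEmpty_or_nonempty n with hn | hn
  · simp
  have hcard : (0 : ℝ) < Fintype.card n := by exact_mod_cast Fintype.card_pos
  have htrace : (regularizedGram φ K).trace ≤ Fintype.card n + K := by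
    rw [trace_regularizedGram]
    gcongr
    simpa using sum_le_sum hφ
  gcongr
  · exact div_pos (posDef_regularizedGram φ K).trace_pos hcard
  · rwa [one_add_div hcard.ne', div_le_div_iff_of_pos_right hcard]

end RegularizedGram

theorem stmt_12_general (d K : ℕ)
    (φ : ℕ → Fin d → ℝ)
    (hφ : ∀ k ∈ Finset.Icc 1 K, ∑ i, φ k i ^ 2 ≤ 1)
    (Λ : ℕ → Matrix (Fin d) (Fin d) ℝ)
    (hΛ : ∀ k ∈ Finset.Icc 1 K,
      Λ k = 1 + ∑ τ ∈ Finset.Icc 1 (k - 1), vecMulVec (φ τ) (φ τ)) :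
    ∑ k ∈ Finset.Icc 1 K, φ k ⬝ᵥ ((Λ k)⁻¹ *ᵥ φ k) ≤
      2 * (d : ℝ) * Real.log (1 + (K : ℝ) / (d : ℝ)) := by
  have hnorm : ∀ k ∈ Icc 1 K, φ k ⬝ᵥ φ k ≤ 1 := fun k hk => by
    simpa [dotProduct, sq] using hφ k hk
  have hΛ' : ∀ k ∈ Icc 1 K, Λ k = regularizedGram φ (k - 1) := hΛ
  calc ∑ k ∈ Icc 1 K, φ k ⬝ᵥ ((Λ k)⁻¹ *ᵥ φ k)
      ≤ ∑ k ∈ Icc 1 K, 2 * Real.log (1 + φ k ⬝ᵥ ((regularizedGram φ (k - 1))⁻¹ *ᵥ φ k)) := by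
        refine sum_le_sum fun k hk => ?_
        rw [hΛ' k hk]
        refine Real.le_two_mul_log_one_add
          (dotProduct_inv_regularizedGram_mulVec_nonneg φ (k - 1) (φ k)) ?_
        linarith [dotProduct_inv_regularizedGram_mulVec_le φ (k - 1) (φ k), hnorm k hk]
    _ = 2 * Real.log (regularizedGram φ K).det := by
        rw [← mul_sum, det_regularizedGram, Real.log_prod fun k _ =>
          by linarith [dotProduct_inv_regularizedGram_mulVec_nonneg φ (k - 1) (φ k)]]
    _ ≤ 2 * (d * Real.log (1 + K / d)) := by
        gcongr
        simpa using log_det_regularizedGram_le hnorm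
    _ = 2 * d * Real.log (1 + K / d) := by ring

theorem stmt_12 (d K : ℕ) (hd : 1 ≤ d) (hK : 1 ≤ K)
    (φ : ℕ → Fin d → ℝ)
    (hφ : ∀ k ∈ Finset.Icc 1 K, ∑ i, φ k i ^ 2 ≤ 1)
    (Λ : ℕ → Matrix (Fin d) (Fin d) ℝ)
    (hΛ : ∀ k ∈ Finset.Icc 1 K,
      Λ k = 1 + ∑ τ ∈ Finset.Icc 1 (k - 1), vecMulVec (φ τ) (φ τ)) :
    ∑ k ∈ Finset.Icc 1 K, φ k ⬝ᵥ ((Λ k)⁻¹ *ᵥ φ k) ≤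
      2 * (d : ℝ) * Real.log (1 + (K : ℝ) / (d : ℝ)) :=
  stmt_12_general d K φ hφ Λ hΛ
end

section
/- Let d ≥ 1, n ≥ 0, let φ_1, …, φ_n ∈ ℝ^d and y_1, …, y_n ∈ ℝ, and set Λ := I_d + Σ_{τ=1}^{n} φ_τ φ_τ^⊤ and w := Λ^{−1} Σ_{τ=1}^{n} φ_τ y_τ. Then for every w̃ ∈ ℝ^d and every x ∈ ℝ^d: |⟨x, w⟩ − ⟨x, w̃⟩| ≤ ‖x‖_{Λ^{−1}} · ( ‖Σ_{τ=1}^{n} φ_τ (y_τ − ⟨φ_τ, w̃⟩)‖_{Λ^{−1}} + ‖w̃‖_2 ), where ‖v‖_{Λ^{−1}} := √(v^⊤ Λ^{−1} v). -/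
/-!
Since `Λ w̃ = w̃ + Σ φ_τ φ_τᵀ w̃`, we get `w - w̃ = Λ⁻¹ Σ φ_τ (y_τ - ⟨φ_τ, w̃⟩) - Λ⁻¹ w̃`.
Pairing with `x` and applying Cauchy–Schwarz for the inner product `⟨u, v⟩ = uᵀ Λ⁻¹ v` to both
terms gives the bound, once `w̃ᵀ Λ⁻¹ w̃ ≤ ‖w̃‖²`, which holds because `Λ ⪰ I`.
-/

open Matrix

namespace Matrix

variable {n : Type*} [Fintype n]

theorem PosSemidef.abs_dotProduct_mulVec_le {A : Matrix n n ℝ} (hA : A.PosSemidef)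
    (x y : n → ℝ) :
    |x ⬝ᵥ (A *ᵥ y)| ≤ √(x ⬝ᵥ (A *ᵥ x)) * √(y ⬝ᵥ (A *ᵥ y)) := by
  let _ := A.toSeminormedAddCommGroup hA
  let _ := A.toInnerProductSpace hA
  have inner_eq : ∀ u v : n → ℝ, inner ℝ u v = u ⬝ᵥ (A *ᵥ v) := fun u v => by
    change (A *ᵥ v) ⬝ᵥ star u = _
    rw [star_trivial, dotProduct_comm]
  have hcs := real_inner_mul_inner_self_le x y
  simp only [inner_eq] at hcs
  rw [← Real.sqrt_mul (inner_eq x x ▸ real_inner_self_nonneg)]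
  exact Real.abs_le_sqrt (by rw [sq]; exact hcs)

section Gram
variable {ι : Type*} (s : Finset ι) (φ : ι → n → ℝ)

theorem sum_vecMulVec_self_mulVec (v : n → ℝ) :
    (∑ τ ∈ s, vecMulVec (φ τ) (φ τ)) *ᵥ v = ∑ τ ∈ s, (φ τ ⬝ᵥ v) • φ τ := by
  simp only [sum_mulVec, vecMulVec_mulVec, op_smul_eq_smul]

theorem posSemidef_sum_vecMulVec_self_s18 :
    (∑ τ ∈ s, vecMulVec (φ τ) (φ τ)).PosSemidef :=
  posSemidef_sum s fun τ _ => by simpa using posSemidef_vecMulVec_self_star (φ τ)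

theorem sum_sub_dotProduct_smul_eq (y : ι → ℝ) (v : n → ℝ) :
    ∑ τ ∈ s, (y τ - φ τ ⬝ᵥ v) • φ τ =
      ∑ τ ∈ s, y τ • φ τ - (∑ τ ∈ s, vecMulVec (φ τ) (φ τ)) *ᵥ v := by
  simp only [sum_vecMulVec_self_mulVec, sub_smul, Finset.sum_sub_distrib]

end Gram

theorem dotProduct_inv_mulVec_le_of_posSemidef_sub_one [DecidableEq n] {A : Matrix n n ℝ}
    (hA : (A - 1).PosSemidef) (x : n → ℝ) : x ⬝ᵥ (A⁻¹ *ᵥ x) ≤ x ⬝ᵥ x := by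
  have hApd : A.PosDef := by simpa using PosDef.one.add_posSemidef hA
  have hdet : IsUnit A.det := (isUnit_iff_isUnit_det A).mp hApd.isUnit
  set u := A⁻¹ *ᵥ x
  set q := x ⬝ᵥ u
  have hAu : A *ᵥ u = x := by rw [mulVec_mulVec, mul_nonsing_inv _ hdet, one_mulVec]
  -- `q = uᵀ A u ≥ ‖u‖²`, while Cauchy–Schwarz gives `q ≤ ‖x‖ ‖u‖ ≤ ‖x‖ √q`.
  have hq : u ⬝ᵥ u ≤ q := by
    have h := hA.dotProduct_mulVec_nonneg u
    rwa [sub_mulVec, dotProduct_sub, hAu, one_mulVec, dotProduct_comm, sub_nonneg] at h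
  have hcs : q ≤ √(x ⬝ᵥ x) * √q := by
    have h := PosSemidef.one.abs_dotProduct_mulVec_le x u
    simp only [one_mulVec] at h
    exact (le_abs_self q).trans (h.trans (by gcongr))
  have hq0 : 0 ≤ q := (dotProduct_self_star_nonneg u).trans hq
  have hsq : √q ≤ √(x ⬝ᵥ x) := by
    rcases (Real.sqrt_nonneg q).eq_or_lt with h0 | h0
    · rw [← h0]; exact Real.sqrt_nonneg _
    · refine le_of_mul_le_mul_right ?_ h0
      rwa [Real.mul_self_sqrt hq0]
  exact (Real.sqrt_le_sqrt_iff (dotProduct_self_star_nonneg x)).mp hsq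

theorem inv_mulVec_sub_eq_of_eq_one_add [DecidableEq n] {Λ G : Matrix n n ℝ} (hΛ : Λ = 1 + G)
    (hdet : IsUnit Λ.det) (s v : n → ℝ) :
    Λ⁻¹ *ᵥ s - v = Λ⁻¹ *ᵥ (s - G *ᵥ v) - Λ⁻¹ *ᵥ v := by
  have hv : Λ⁻¹ *ᵥ (Λ *ᵥ v) = v := by rw [mulVec_mulVec, nonsing_inv_mul _ hdet, one_mulVec]
  have hΛv : Λ *ᵥ v = v + G *ᵥ v := by rw [hΛ, add_mulVec, one_mulVec]
  conv_lhs => rw [← hv, ← mulVec_sub, hΛv]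
  rw [← mulVec_sub, sub_add_eq_sub_sub_swap]

end Matrix

theorem stmt_18_general (d n : ℕ)
    (φ : ℕ → Fin d → ℝ) (y : ℕ → ℝ)
    (Λ : Matrix (Fin d) (Fin d) ℝ)
    (hΛ : Λ = 1 + ∑ τ ∈ Finset.Icc 1 n, vecMulVec (φ τ) (φ τ))
    (w : Fin d → ℝ)
    (hw : w = Λ⁻¹ *ᵥ ∑ τ ∈ Finset.Icc 1 n, y τ • φ τ)
    (wt x : Fin d → ℝ) :
    |x ⬝ᵥ w - x ⬝ᵥ wt| ≤
      Real.sqrt (x ⬝ᵥ (Λ⁻¹ *ᵥ x)) *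
        (Real.sqrt ((∑ τ ∈ Finset.Icc 1 n, (y τ - φ τ ⬝ᵥ wt) • φ τ) ⬝ᵥ
            (Λ⁻¹ *ᵥ ∑ τ ∈ Finset.Icc 1 n, (y τ - φ τ ⬝ᵥ wt) • φ τ)) +
          Real.sqrt (wt ⬝ᵥ wt)) := by
  have hGram := posSemidef_sum_vecMulVec_self_s18 (Finset.Icc 1 n) φ
  have hΛ1 : (Λ - 1).PosSemidef := by rwa [hΛ, add_sub_cancel_left]
  have hΛpd : Λ.PosDef := hΛ ▸ PosDef.one.add_posSemidef hGram
  have hdet : IsUnit Λ.det := (isUnit_iff_isUnit_det Λ).mp hΛpd.isUnit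
  have hinv : Λ⁻¹.PosSemidef := hΛpd.inv.posSemidef
  set e := ∑ τ ∈ Finset.Icc 1 n, (y τ - φ τ ⬝ᵥ wt) • φ τ with he
  have herr : w - wt = Λ⁻¹ *ᵥ e - Λ⁻¹ *ᵥ wt := by
    rw [hw, he, sum_sub_dotProduct_smul_eq]
    exact inv_mulVec_sub_eq_of_eq_one_add hΛ hdet _ _
  have hwt : √(wt ⬝ᵥ (Λ⁻¹ *ᵥ wt)) ≤ √(wt ⬝ᵥ wt) :=
    Real.sqrt_le_sqrt (dotProduct_inv_mulVec_le_of_posSemidef_sub_one hΛ1 wt)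
  calc |x ⬝ᵥ w - x ⬝ᵥ wt|
      = |x ⬝ᵥ (Λ⁻¹ *ᵥ e) - x ⬝ᵥ (Λ⁻¹ *ᵥ wt)| := by rw [← dotProduct_sub, herr, dotProduct_sub]
    _ ≤ |x ⬝ᵥ (Λ⁻¹ *ᵥ e)| + |x ⬝ᵥ (Λ⁻¹ *ᵥ wt)| := abs_sub _ _
    _ ≤ √(x ⬝ᵥ (Λ⁻¹ *ᵥ x)) * √(e ⬝ᵥ (Λ⁻¹ *ᵥ e)) + √(x ⬝ᵥ (Λ⁻¹ *ᵥ x)) * √(wt ⬝ᵥ wt) := by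
      gcongr
      · exact hinv.abs_dotProduct_mulVec_le x e
      · exact (hinv.abs_dotProduct_mulVec_le x wt).trans
          (mul_le_mul_of_nonneg_left hwt (Real.sqrt_nonneg _))
    _ = _ := by rw [mul_add]

theorem stmt_18 (d n : ℕ) (hd : 1 ≤ d)
    (φ : ℕ → Fin d → ℝ) (y : ℕ → ℝ)
    (Λ : Matrix (Fin d) (Fin d) ℝ)
    (hΛ : Λ = 1 + ∑ τ ∈ Finset.Icc 1 n, vecMulVec (φ τ) (φ τ))
    (w : Fin d → ℝ)
    (hw : w = Λ⁻¹ *ᵥ ∑ τ ∈ Finset.Icc 1 n, y τ • φ τ)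
    (wt x : Fin d → ℝ) :
    |x ⬝ᵥ w - x ⬝ᵥ wt| ≤
      Real.sqrt (x ⬝ᵥ (Λ⁻¹ *ᵥ x)) *
        (Real.sqrt ((∑ τ ∈ Finset.Icc 1 n, (y τ - φ τ ⬝ᵥ wt) • φ τ) ⬝ᵥ
            (Λ⁻¹ *ᵥ ∑ τ ∈ Finset.Icc 1 n, (y τ - φ τ ⬝ᵥ wt) • φ τ)) +
          Real.sqrt (wt ⬝ᵥ wt)) :=
  stmt_18_general d n φ y Λ hΛ w hw wt x
end
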